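/- arXiv:2409.05565 — 2 statements merged into one kernel-verified Lean document; each statement's English description precedes it below -/
import Mathlib

section
/- Let n ≥ 1, let W be an n × n real matrix with entries w_{ij}, let λ > 0, and suppose (Σ_{i=1}^{n} Σ_{j=1}^{n} w_{ij}²)^(1/2) < 1/λ. Define T : (Fin n → ℝ) → (Fin n → ℝ) by (T A)_i = tanh(λ · Σ_{j=1}^{n} w_{ij} A_j). Then T has exactly one fixed point: there exists a unique A* ∈ Fin n → ℝ with T(A*) = A*. -/
lemma tanh_hasDerivAt (x : ℝ) : HasDerivAt Real.tanh (1 / Real.cosh x ^ 2) x := by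
  have h := (Real.hasDerivAt_sinh x).div (Real.hasDerivAt_cosh x)
    (ne_of_gt (Real.cosh_pos x))
  have hfun : (Real.sinh / Real.cosh) = Real.tanh := by
    funext y; rw [Pi.div_apply, Real.tanh_eq_sinh_div_cosh]
  rw [hfun] at h
  have := Real.cosh_sq_sub_sinh_sq x
  have e : Real.cosh x * Real.cosh x - Real.sinh x * Real.sinh x = 1 := by nlinarith
  rw [e] at h
  exact h
 
lemma tanh_lipschitz : LipschitzWith 1 Real.tanh := by
  apply lipschitzWith_of_nnnorm_deriv_le
  · exact fun x => (tanh_hasDerivAt x).differentiableAt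
  · intro x
    rw [(tanh_hasDerivAt x).deriv]
    rw [← NNReal.coe_le_coe, coe_nnnorm, Real.norm_eq_abs, NNReal.coe_one]
    have h1 : (1 : ℝ) ≤ Real.cosh x ^ 2 := by
      nlinarith [Real.cosh_pos x, Real.cosh_sq_sub_sinh_sq x, sq_nonneg (Real.sinh x)]
    rw [abs_of_nonneg (by positivity)]
    rw [div_le_one (by positivity)]
    exact h1

lemma tanh_dist_le (a b : ℝ) : |Real.tanh a - Real.tanh b| ≤ |a - b| := by
  have := tanh_lipschitz.dist_le_mul a b
  simpa [Real.dist_eq] using this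

theorem tanh_fggcm_unique_fixed_point (n : ℕ) (hn : 1 ≤ n)
    (W : Matrix (Fin n) (Fin n) ℝ) (l : ℝ) (hl : 0 < l)
    (hW : (∑ i : Fin n, ∑ j : Fin n, (W i j) ^ 2) ^ ((1 : ℝ) / 2) < 1 / l)
    (T : (Fin n → ℝ) → (Fin n → ℝ))
    (hT : ∀ (A : Fin n → ℝ) (i : Fin n), T A i = Real.tanh (l * ∑ j : Fin n, W i j * A j)) :
    ∃! A : Fin n → ℝ, T A = A := by
  classical
  set s : ℝ := ∑ i : Fin n, ∑ j : Fin n, (W i j) ^ 2 with hs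
  have hs0 : 0 ≤ s := Finset.sum_nonneg fun i _ => Finset.sum_nonneg fun j _ => sq_nonneg _
  have hsqrt : Real.sqrt s = s ^ ((1 : ℝ) / 2) := Real.sqrt_eq_rpow s
  set c : ℝ := Real.sqrt s with hc
  have hc0 : 0 ≤ c := Real.sqrt_nonneg s
  have hcsq : c ^ 2 = s := Real.sq_sqrt hs0
  have hlc : l * c < 1 := by
    have : c < 1 / l := by rw [hc, Real.sqrt_eq_rpow]; exact hW
    calc l * c < l * (1 / l) := by exact mul_lt_mul_of_pos_left this hl
    _ = 1 := by field_simp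
  -- work in Euclidean space
  set E := EuclideanSpace ℝ (Fin n)
  set S : E → E := fun A => WithLp.toLp 2 (fun i => Real.tanh (l * ∑ j : Fin n, W i j * A j)) with hS
  set K : NNReal := ⟨l * c, mul_nonneg hl.le hc0⟩ with hK
  have hdist : ∀ A B : E, dist (S A) (S B) ≤ (l * c) * dist A B := by
    intro A B
    rw [EuclideanSpace.dist_eq, EuclideanSpace.dist_eq]
    have key : ∑ i : Fin n, dist (S A i) (S B i) ^ 2 ≤
        (l * c) ^ 2 * ∑ j : Fin n, dist (A j) (B j) ^ 2 := by
      have hterm : ∀ i : Fin n, dist (S A i) (S B i) ^ 2 ≤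
          l ^ 2 * (∑ j : Fin n, (W i j) ^ 2) * ∑ j : Fin n, dist (A j) (B j) ^ 2 := by
        intro i
        have h1 : dist (S A i) (S B i) ≤
            |l * ∑ j : Fin n, W i j * A j - l * ∑ j : Fin n, W i j * B j| := by
          rw [Real.dist_eq]
          exact tanh_dist_le _ _
        have h2 : dist (S A i) (S B i) ^ 2 ≤
            (l * ∑ j : Fin n, W i j * A j - l * ∑ j : Fin n, W i j * B j) ^ 2 := by
          rw [← sq_abs (l * ∑ j : Fin n, W i j * A j - l * ∑ j : Fin n, W i j * B j)]
          exact pow_le_pow_left₀ dist_nonneg h1 2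
        have h3 : (l * ∑ j : Fin n, W i j * A j - l * ∑ j : Fin n, W i j * B j) ^ 2
            = l ^ 2 * (∑ j : Fin n, W i j * (A j - B j)) ^ 2 := by
          rw [← mul_sub, ← Finset.sum_sub_distrib]
          rw [mul_pow]
          congr 2
          apply Finset.sum_congr rfl
          intro j _
          ring
        have h4 : (∑ j : Fin n, W i j * (A j - B j)) ^ 2 ≤
            (∑ j : Fin n, (W i j) ^ 2) * ∑ j : Fin n, (A j - B j) ^ 2 :=
          Finset.sum_mul_sq_le_sq_mul_sq _ _ _
        have h5 : ∑ j : Fin n, (A j - B j) ^ 2 = ∑ j : Fin n, dist (A j) (B j) ^ 2 := by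
          apply Finset.sum_congr rfl
          intro j _
          rw [Real.dist_eq, sq_abs]
        calc dist (S A i) (S B i) ^ 2
            ≤ l ^ 2 * (∑ j : Fin n, W i j * (A j - B j)) ^ 2 := by rw [← h3]; exact h2
          _ ≤ l ^ 2 * ((∑ j : Fin n, (W i j) ^ 2) * ∑ j : Fin n, (A j - B j) ^ 2) := by
              apply mul_le_mul_of_nonneg_left h4 (sq_nonneg l)
          _ = l ^ 2 * (∑ j : Fin n, (W i j) ^ 2) * ∑ j : Fin n, dist (A j) (B j) ^ 2 := by
              rw [h5]; ring
      calc ∑ i : Fin n, dist (S A i) (S B i) ^ 2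
          ≤ ∑ i : Fin n, l ^ 2 * (∑ j : Fin n, (W i j) ^ 2) * ∑ j : Fin n, dist (A j) (B j) ^ 2 :=
            Finset.sum_le_sum fun i _ => hterm i
        _ = (l * c) ^ 2 * ∑ j : Fin n, dist (A j) (B j) ^ 2 := by
            rw [← Finset.sum_mul, ← Finset.mul_sum, mul_pow, hcsq, hs]
    calc Real.sqrt (∑ i : Fin n, dist (S A i) (S B i) ^ 2)
        ≤ Real.sqrt ((l * c) ^ 2 * ∑ j : Fin n, dist (A j) (B j) ^ 2) :=
          Real.sqrt_le_sqrt key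
      _ = (l * c) * Real.sqrt (∑ j : Fin n, dist (A j) (B j) ^ 2) := by
          rw [Real.sqrt_mul (sq_nonneg _), Real.sqrt_sq (mul_nonneg hl.le hc0)]
  have hLip : LipschitzWith K S := LipschitzWith.of_dist_le_mul fun A B => hdist A B
  have hContr : ContractingWith K S := ⟨by exact_mod_cast hlc, hLip⟩
  obtain ⟨A, hA, _, _⟩ := hContr.exists_fixedPoint (0 : E) (edist_ne_top _ _)
  have hST : ∀ A : E, WithLp.ofLp (S A) = T (WithLp.ofLp A) := by
    intro A
    funext i
    exact (hT A i).symm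
  refine ⟨WithLp.ofLp A, ?_, ?_⟩
  · show T (WithLp.ofLp A) = WithLp.ofLp A
    rw [← hST A]; exact congrArg WithLp.ofLp hA
  · intro B hB
    exact congrArg WithLp.ofLp (hContr.fixedPoint_unique' (x := WithLp.toLp 2 B) (y := A) (WithLp.ofLp_injective 2 (by rw [hST]; exact hB)) hA)
end

section
/- Let n ≥ 1, let W be an n × n real matrix with entries w_{ij}, let λ > 0, and suppose (λ/4) · (Σ_{i=1}^{n} Σ_{j=1}^{n} w_{ij}²)^(1/2) ≤ 1. Define S : (Fin n → ℝ) → (Fin n → ℝ) by (S A)_i = 1 / (1 + e^{-λ · Σ_{j=1}^{n} w_{ij} A_j}). Then S is nonexpansive with respect to the Euclidean norm: ‖S A - S A'‖₂ ≤ ‖A - A'‖₂ for all A, A'. -/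
lemma sigmoid_hasDerivAt (t : ℝ) :
    HasDerivAt (fun x : ℝ => (1 + Real.exp (-x))⁻¹)
      (Real.exp (-t) / (1 + Real.exp (-t)) ^ 2) t := by
  have h1 : HasDerivAt (fun x : ℝ => 1 + Real.exp (-x)) (-Real.exp (-t)) t := by
    have := ((Real.hasDerivAt_exp (-t)).comp t (hasDerivAt_neg t)).const_add 1
    simpa using this
  have hne : (1 + Real.exp (-t)) ≠ 0 := by positivity
  have := h1.inv hne
  exact (by simpa [neg_neg, neg_div] using this : HasDerivAt (fun x : ℝ => 1 + Real.exp (-x))⁻¹ (Real.exp (-t) / (1 + Real.exp (-t)) ^ 2) t)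

lemma sigmoid_lip (x y : ℝ) :
    |(1 + Real.exp (-x))⁻¹ - (1 + Real.exp (-y))⁻¹| ≤ |x - y| / 4 := by
  have key := Convex.norm_image_sub_le_of_norm_hasDerivWithin_le
    (f := fun x : ℝ => (1 + Real.exp (-x))⁻¹)
    (f' := fun t : ℝ => Real.exp (-t) / (1 + Real.exp (-t)) ^ 2)
    (C := 1/4) (s := Set.univ)
    (fun t _ => (sigmoid_hasDerivAt t).hasDerivWithinAt)
    (fun t _ => by
      have he : 0 < Real.exp (-t) := Real.exp_pos _
      rw [Real.norm_eq_abs, abs_of_nonneg (by positivity), div_le_iff₀ (by positivity)]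
      nlinarith [sq_nonneg (1 - Real.exp (-t))])
    convex_univ (Set.mem_univ y) (Set.mem_univ x)
  rw [Real.norm_eq_abs, Real.norm_eq_abs] at key
  linarith

theorem sigmoid_fggcm_nonexpansive (n : ℕ) (hn : 1 ≤ n)
    (W : Matrix (Fin n) (Fin n) ℝ) (l : ℝ) (hl : 0 < l)
    (hW : (l / 4) * (∑ i : Fin n, ∑ j : Fin n, (W i j) ^ 2) ^ ((1 : ℝ) / 2) ≤ 1)
    (S : (Fin n → ℝ) → (Fin n → ℝ))
    (hS : ∀ (A : Fin n → ℝ) (i : Fin n),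
      S A i = 1 / (1 + Real.exp (-(l * ∑ j : Fin n, W i j * A j)))) :
    ∀ A A' : Fin n → ℝ,
      (∑ i : Fin n, (S A i - S A' i) ^ 2) ^ ((1 : ℝ) / 2) ≤
        (∑ i : Fin n, (A i - A' i) ^ 2) ^ ((1 : ℝ) / 2) := by
  intro A A'
  set T : ℝ := ∑ i : Fin n, ∑ j : Fin n, (W i j) ^ 2 with hT
  set D : ℝ := ∑ i : Fin n, (A i - A' i) ^ 2 with hD
  have hTnn : 0 ≤ T := Finset.sum_nonneg fun i _ =>
    Finset.sum_nonneg fun j _ => sq_nonneg _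
  have hDnn : 0 ≤ D := Finset.sum_nonneg fun i _ => sq_nonneg _
  have hWrt : (l / 4) * Real.sqrt T ≤ 1 := by
    rwa [← Real.sqrt_eq_rpow] at hW
  have hsq : (l / 4) ^ 2 * T ≤ 1 := by
    have h0 : 0 ≤ (l / 4) * Real.sqrt T := by positivity
    have h2 : ((l / 4) * Real.sqrt T) ^ 2 ≤ 1 := by nlinarith
    calc (l / 4) ^ 2 * T = ((l / 4) * Real.sqrt T) ^ 2 := by
          rw [mul_pow, Real.sq_sqrt hTnn]
      _ ≤ 1 := h2
  -- pointwise bound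
  have hpt : ∀ i : Fin n,
      (S A i - S A' i) ^ 2 ≤ (l/4)^2 * (∑ j : Fin n, (W i j)^2) * D := by
    intro i
    have h1 : |S A i - S A' i| ≤
        |l * ∑ j : Fin n, W i j * A j - l * ∑ j : Fin n, W i j * A' j| / 4 := by
      rw [hS A i, hS A' i]
      simpa [one_div] using
        sigmoid_lip (l * ∑ j : Fin n, W i j * A j) (l * ∑ j : Fin n, W i j * A' j)
    have habs : |S A i - S A' i| ^ 2 ≤
        (|l * ∑ j : Fin n, W i j * A j - l * ∑ j : Fin n, W i j * A' j| / 4) ^ 2 :=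
      pow_le_pow_left₀ (abs_nonneg _) h1 2
    rw [sq_abs, div_pow, sq_abs] at habs
    have hdiff : l * ∑ j : Fin n, W i j * A j - l * ∑ j : Fin n, W i j * A' j
        = l * ∑ j : Fin n, W i j * (A j - A' j) := by
      rw [← mul_sub, ← Finset.sum_sub_distrib]
      congr 1
      exact Finset.sum_congr rfl fun j _ => by ring
    have hCS : (∑ j : Fin n, W i j * (A j - A' j)) ^ 2 ≤
        (∑ j : Fin n, (W i j) ^ 2) * D :=
      Finset.sum_mul_sq_le_sq_mul_sq Finset.univ (fun j => W i j) (fun j => A j - A' j)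
    calc (S A i - S A' i) ^ 2
        ≤ (l * ∑ j : Fin n, W i j * (A j - A' j)) ^ 2 / 4 ^ 2 := by
          rw [← hdiff]; exact habs
      _ = (l/4)^2 * (∑ j : Fin n, W i j * (A j - A' j)) ^ 2 := by ring
      _ ≤ (l/4)^2 * ((∑ j : Fin n, (W i j)^2) * D) := by
          apply mul_le_mul_of_nonneg_left hCS (by positivity)
      _ = (l/4)^2 * (∑ j : Fin n, (W i j)^2) * D := by ring
  have hsum : (∑ i : Fin n, (S A i - S A' i) ^ 2) ≤ D := by
    calc (∑ i : Fin n, (S A i - S A' i) ^ 2)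
        ≤ ∑ i : Fin n, (l/4)^2 * (∑ j : Fin n, (W i j)^2) * D :=
          Finset.sum_le_sum fun i _ => hpt i
      _ = (l/4)^2 * T * D := by
          rw [← Finset.sum_mul, ← Finset.mul_sum]
      _ ≤ 1 * D := mul_le_mul_of_nonneg_right hsq hDnn
      _ = D := one_mul D
  have hLnn : 0 ≤ ∑ i : Fin n, (S A i - S A' i) ^ 2 :=
    Finset.sum_nonneg fun i _ => sq_nonneg _
  exact Real.rpow_le_rpow hLnn hsum (by norm_num)
end
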